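/- For r = 2 the Thom polynomial candidate T = S_{(2,2,2)} + 5S_{(1,2,3)} + 6S_{(1,1,4)} + 19S_{(2,4)} + 30S_{(1,5)} + 36S_{(6)} + 5S_{(3,3)} satisfies the A-series restriction equations: T(-{b}) = 0, T(x - {b, 2x}) = 0, T(x - {b, 3x}) = 0, and T(x - {b, 4x}) = ∏_{a ∈ {x,2x,3x}} ∏_{c ∈ {b, 4x}} (a - c), as identities of polynomials in ℤ[x, b]. -/

import Mathlib

noncomputable section

def Scoef {R : Type*} [CommRing R] (f : PowerSeries R) : ℤ → R :=
  fun k => if k < 0 then 0 else PowerSeries.coeff k.toNat f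

/-- Jacobi–Trudi determinant `S_I = det(S_{i_p+p-q})`. -/
def schurJT {R : Type*} [CommRing R] (f : PowerSeries R) {s : ℕ} (I : Fin s → ℕ) : R :=
  (Matrix.of fun p q : Fin s => Scoef f ((I p : ℤ) + (p : ℤ) - (q : ℤ))).det

abbrev R18 : Type := MvPolynomial (Fin 2) ℤ

/-- the variable `x` -/
def xv : R18 := MvPolynomial.X 0
/-- the Chern root `b` -/
def bv : R18 := MvPolynomial.X 1

/-- The Thom polynomial candidate for `r = 2` evaluated on a series. -/
def T18 (g : PowerSeries R18) : R18 :=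
  schurJT g ![2,2,2] + 5 * schurJT g ![1,2,3] + 6 * schurJT g ![1,1,4]
    + 19 * schurJT g ![2,4] + 30 * schurJT g ![1,5] + 36 * schurJT g ![6]
    + 5 * schurJT g ![3,3]

/-! The coefficients of `(1 - b z)(1 - c z)/(1 - x z)` are `1`, `x - b - c` and
`x ^ (k - 2) * (x - b) * (x - c)` for `k ≥ 2`. Substituting them into the Jacobi–Trudi
determinants, `T(x - {b, c}) = ∏_{a ∈ {x, 2x, 3x}} (a - b)(a - c)` holds identically in
`x, b, c`, so the four equations are its specializations `c = 2x, 3x, 4x` and `x = c = 0`. -/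

open PowerSeries

section CompleteDiff

variable {R : Type*} [CommRing R]

theorem coeff_succ_one_sub_C_mul_X_mul (a : R) (f : PowerSeries R) (n : ℕ) :
    coeff (n + 1) ((1 - C a * X) * f) = coeff (n + 1) f - a * coeff n f := by
  simp [sub_mul, mul_assoc, coeff_succ_X_mul]

theorem coeff_zero_one_sub_C_mul_X_mul (a : R) (f : PowerSeries R) :
    coeff 0 ((1 - C a * X) * f) = coeff 0 f := by
  simp [sub_mul, mul_assoc]

/-- `completeDiff x b c k = S_k(x - {b, c})`, the coefficient of `zᵏ` in
`(1 - b z)(1 - c z)/(1 - x z)`. -/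
def completeDiff (x b c : R) : ℕ → R
  | 0 => 1
  | 1 => x - b - c
  | n + 2 => x ^ n * ((x - b) * (x - c))

theorem coeff_eq_completeDiff {x b c : R} {g : PowerSeries R}
    (hg : (1 - C x * X) * g = (1 - C b * X) * (1 - C c * X)) (n : ℕ) :
    coeff n g = completeDiff x b c n := by
  have h0 := congrArg (coeff 0) hg
  have hsucc := fun n => congrArg (coeff (n + 1)) hg
  simp only [coeff_zero_one_sub_C_mul_X_mul, coeff_succ_one_sub_C_mul_X_mul] at h0 hsucc
  have c0 : coeff 0 g = 1 := by simpa using h0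
  have c1 : coeff 1 g = x - b - c := by
    have h1 := hsucc 0
    simp [-coeff_zero_eq_constantCoeff, c0] at h1
    linear_combination h1
  have hrec (n : ℕ) : coeff (n + 2) g = x * coeff (n + 1) g + if n = 0 then b * c else 0 := by
    have h := hsucc (n + 1)
    simp [coeff_C] at h
    linear_combination h
  induction n with
  | zero => exact c0
  | succ n ih =>
    rcases n with _ | n
    · exact c1
    · rw [hrec, ih]
      rcases n with _ | n <;> simp [completeDiff] <;> ring

end CompleteDiff

theorem T18_eq_resultant {x b c : R18} {g : PowerSeries R18}
    (hg : (1 - C x * X) * g = (1 - C b * X) * (1 - C c * X)) :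
    T18 g = ((x - b) * (x - c)) * ((2 * x - b) * (2 * x - c)) * ((3 * x - b) * (3 * x - c)) := by
  simp [T18, schurJT, Scoef, coeff_eq_completeDiff hg, completeDiff, Matrix.det_fin_three,
    Matrix.det_fin_two]
  ring

/-- The `r = 2` Thom polynomial satisfies the `A`-series restriction equations:
`T(-{b}) = 0`, `T(x-{b,2x}) = 0`, `T(x-{b,3x}) = 0`, and
`T(x-{b,4x}) = ∏_{a∈{x,2x,3x}} ∏_{c∈{b,4x}} (a-c)`. -/
theorem thom_A3_r2_A_equations (g₀ g₂ g₃ g₄ : PowerSeries R18)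
    (hg₀ : (1 : PowerSeries R18) * g₀ = 1 - PowerSeries.C bv * PowerSeries.X)
    (hg₂ : (1 - PowerSeries.C xv * PowerSeries.X) * g₂ =
      (1 - PowerSeries.C bv * PowerSeries.X) *
        (1 - PowerSeries.C (2 * xv) * PowerSeries.X))
    (hg₃ : (1 - PowerSeries.C xv * PowerSeries.X) * g₃ =
      (1 - PowerSeries.C bv * PowerSeries.X) *
        (1 - PowerSeries.C (3 * xv) * PowerSeries.X))
    (hg₄ : (1 - PowerSeries.C xv * PowerSeries.X) * g₄ =
      (1 - PowerSeries.C bv * PowerSeries.X) *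
        (1 - PowerSeries.C (4 * xv) * PowerSeries.X)) :
    T18 g₀ = 0 ∧ T18 g₂ = 0 ∧ T18 g₃ = 0 ∧
    T18 g₄ =
      ((xv - bv) * (xv - 4 * xv)) * ((2 * xv - bv) * (2 * xv - 4 * xv)) *
        ((3 * xv - bv) * (3 * xv - 4 * xv)) := by
  have hg₀' : (1 - C 0 * X) * g₀ = (1 - C bv * X) * (1 - C 0 * X) := by simpa using hg₀
  refine ⟨?_, ?_, ?_, ?_⟩
  · rw [T18_eq_resultant hg₀']; ring
  · rw [T18_eq_resultant hg₂]; ring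
  · rw [T18_eq_resultant hg₃]; ring
  · exact T18_eq_resultant hg₄

end
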